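/- arXiv:0807.4418 — 2 statements merged into one kernel-verified Lean document; each statement's English description precedes it below -/
import Mathlib

section
/- For all x, y in the unit ball B^n, |x-y| ≤ 2 tanh(ρ(x,y)/4), where ρ is the hyperbolic metric of B^n; moreover 2 tanh(ρ(x,y)/4) = 2|x-y|/(sqrt(|x-y|^2+t^2)+t) with t = sqrt((1-|x|^2)(1-|y|^2)), and equality |x-y| = 2 tanh(ρ(x,y)/4) holds when x = -y. -/
/-!
Write `d = ‖x - y‖` and `s = √(d² + t²)`. The hypothesis says `tanh(ρ/2) = d / s`, hence
`cosh(ρ/2) = s / t` and `sinh(ρ/2) = d / t`, and the half-angle formula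
`tanh(u/2) = sinh u / (cosh u + 1)` gives `tanh(ρ/4) = d / (s + t)`. The inequality
`d ≤ 2d / (s + t)` amounts to `s + t ≤ 2`, i.e. `d² ≤ 4(1 - t)`; this follows from
`d² ≤ 2‖x‖² + 2‖y‖²` and AM-GM `2t ≤ (1 - ‖x‖²) + (1 - ‖y‖²)`. For `x = -y` one has
`d = 2‖y‖`, `t = 1 - ‖y‖²` and `s = 1 + ‖y‖²`, so `s + t = 2`.
-/

open Real

namespace Real

theorem tanh_half_eq_sinh_div_cosh_add_one (u : ℝ) : tanh (u / 2) = sinh u / (cosh u + 1) := by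
  have hu : u = 2 * (u / 2) := by ring
  rw [hu, sinh_two_mul, cosh_two_mul, tanh_eq_sinh_div_cosh, ← hu,
    div_eq_div_iff (cosh_pos _).ne' (by positivity)]
  linear_combination -sinh (u / 2) * cosh_sq (u / 2)

variable {u d t : ℝ}

theorem cosh_mul_eq_sqrt_of_tanh_sq_eq (ht : 0 < t) (h : tanh u ^ 2 = d ^ 2 / (d ^ 2 + t ^ 2)) :
    cosh u * t = √(d ^ 2 + t ^ 2) := by
  have hc := (cosh_pos u).ne'
  have hs : 0 < d ^ 2 + t ^ 2 := by positivity
  have hsq : (cosh u * t) ^ 2 = d ^ 2 + t ^ 2 := by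
    rw [tanh_eq_sinh_div_cosh, div_pow, div_eq_div_iff (by positivity) hs.ne'] at h
    linear_combination h + (d ^ 2 + t ^ 2) * cosh_sq u
  rw [← hsq, sqrt_sq (by positivity)]

theorem sinh_mul_eq_of_tanh_sq_eq (hu : 0 ≤ u) (hd : 0 ≤ d) (ht : 0 < t)
    (h : tanh u ^ 2 = d ^ 2 / (d ^ 2 + t ^ 2)) : sinh u * t = d := by
  have hcosh := cosh_mul_eq_sqrt_of_tanh_sq_eq ht h
  have hsq : (sinh u * t) ^ 2 = d ^ 2 := by
    have := congrArg (· ^ 2) hcosh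
    simp only [sq_sqrt (by positivity : 0 ≤ d ^ 2 + t ^ 2)] at this
    linear_combination this - t ^ 2 * cosh_sq u
  rw [← sq_eq_sq₀ (mul_nonneg (sinh_nonneg_iff.mpr hu) ht.le) hd, hsq]

theorem tanh_half_eq_of_tanh_sq_eq (hu : 0 ≤ u) (hd : 0 ≤ d) (ht : 0 < t)
    (h : tanh u ^ 2 = d ^ 2 / (d ^ 2 + t ^ 2)) : tanh (u / 2) = d / (√(d ^ 2 + t ^ 2) + t) := by
  rw [tanh_half_eq_sinh_div_cosh_add_one, ← cosh_mul_eq_sqrt_of_tanh_sq_eq ht h,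
    ← sinh_mul_eq_of_tanh_sq_eq hu hd ht h, ← add_one_mul, mul_div_mul_right _ _ ht.ne']

theorem le_two_mul_div_sqrt_add (hd : 0 ≤ d) (ht : 0 < t) (h : d ^ 2 ≤ 4 * (1 - t)) :
    d ≤ 2 * d / (√(d ^ 2 + t ^ 2) + t) := by
  have hs : √(d ^ 2 + t ^ 2) ≤ 2 - t := sqrt_le_iff.mpr ⟨by nlinarith, by nlinarith⟩
  rw [le_div_iff₀ (by positivity)]
  nlinarith

end Real

theorem norm_sub_sq_le_four_mul_one_sub_sqrt {E : Type*} [SeminormedAddCommGroup E] {x y : E}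
    (hx : ‖x‖ ≤ 1) (hy : ‖y‖ ≤ 1) :
    ‖x - y‖ ^ 2 ≤ 4 * (1 - √((1 - ‖x‖ ^ 2) * (1 - ‖y‖ ^ 2))) := by
  have hamgm : √((1 - ‖x‖ ^ 2) * (1 - ‖y‖ ^ 2)) ≤ ((1 - ‖x‖ ^ 2) + (1 - ‖y‖ ^ 2)) / 2 := by
    have ha : 0 ≤ 1 - ‖x‖ ^ 2 := by nlinarith [norm_nonneg x]
    have hb : 0 ≤ 1 - ‖y‖ ^ 2 := by nlinarith [norm_nonneg y]
    exact sqrt_le_iff.mpr ⟨by positivity, by nlinarith [sq_nonneg (‖x‖ ^ 2 - ‖y‖ ^ 2)]⟩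
  have htri : ‖x - y‖ ≤ ‖x‖ + ‖y‖ := norm_sub_le x y
  nlinarith [norm_nonneg (x - y), sq_nonneg (‖x‖ - ‖y‖)]

/-- For `x, y` in the unit ball of `ℝⁿ`, with `t = √((1-‖x‖²)(1-‖y‖²))` and `ρ ≥ 0`
satisfying `tanh²(ρ/2) = ‖x-y‖²/(‖x-y‖²+t²)`, one has
`‖x-y‖ ≤ 2 tanh(ρ/4)`, `2 tanh(ρ/4) = 2‖x-y‖/(√(‖x-y‖²+t²)+t)`, and equality
`‖x-y‖ = 2 tanh(ρ/4)` when `x = -y`. -/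
theorem stmt_1 (n : ℕ) (x y : EuclideanSpace ℝ (Fin n))
    (hx : ‖x‖ < 1) (hy : ‖y‖ < 1) (t : ℝ)
    (ht : t = Real.sqrt ((1 - ‖x‖ ^ 2) * (1 - ‖y‖ ^ 2)))
    (ρ : ℝ) (hρ : 0 ≤ ρ)
    (htanh : Real.tanh (ρ / 2) ^ 2 = ‖x - y‖ ^ 2 / (‖x - y‖ ^ 2 + t ^ 2)) :
    ‖x - y‖ ≤ 2 * Real.tanh (ρ / 4) ∧
    2 * Real.tanh (ρ / 4) =
      2 * ‖x - y‖ / (Real.sqrt (‖x - y‖ ^ 2 + t ^ 2) + t) ∧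
    (x = -y → ‖x - y‖ = 2 * Real.tanh (ρ / 4)) := by
  have ht0 : 0 < t := by
    rw [ht]
    exact sqrt_pos.mpr (mul_pos (by nlinarith [norm_nonneg x]) (by nlinarith [norm_nonneg y]))
  have hkey : 2 * tanh (ρ / 4) = 2 * ‖x - y‖ / (√(‖x - y‖ ^ 2 + t ^ 2) + t) := by
    rw [show ρ / 4 = ρ / 2 / 2 by ring,
      tanh_half_eq_of_tanh_sq_eq (by positivity) (norm_nonneg _) ht0 htanh, mul_div_assoc]
  refine ⟨hkey ▸ le_two_mul_div_sqrt_add (norm_nonneg _) ht0 ?_, hkey, ?_⟩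
  · exact ht ▸ norm_sub_sq_le_four_mul_one_sub_sqrt hx.le hy.le
  · rintro rfl
    have hd : ‖-y - y‖ = 2 * ‖y‖ := by
      rw [← neg_add', norm_neg, ← two_smul ℝ y, norm_smul, Real.norm_two]
    have ht' : t = 1 - ‖y‖ ^ 2 := by
      rw [ht, norm_neg, ← sq, sqrt_sq (by nlinarith [norm_nonneg y])]
    have hs : √(‖-y - y‖ ^ 2 + t ^ 2) = 1 + ‖y‖ ^ 2 := by
      rw [hd, ht', sqrt_eq_iff_eq_sq (by positivity) (by positivity)]
      ring
    rw [hkey, hs, ht', hd]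
    field_simp
    ring
end

section
/- For all real K with 1 ≤ K ≤ 17, log(2^{3K-2} K^{2K} - 1) ≤ (4 + 6 log 2)(K - 1), with equality only for K = 1. -/
/-!
Write `c = 4 + 6 log 2` and `u K = (3K - 2) log 2 + 2K log K`, so that `2^(3K-2) K^(2K) = exp (u K)`.
Both `exp (u K) - 1` and `exp (c (K - 1))` equal `1` at `K = 1`, and the claim follows once
`exp (c (K - 1)) - exp (u K)` is strictly increasing on `[1, 17]`, i.e. once
`u' K exp (u K) < c exp (c (K - 1))`. After taking logarithms this reads `0 < ψ K` with
`ψ K = log c + c (K - 1) - u K - log (u' K)`. Now `ψ 1 = 0` because `u' 1 = c / 2`,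
`ψ 17 > 0` by a careful numerical estimate, and `ψ'' < 0` on `(1, ∞)`, so by strict concavity
`ψ > 0` on `(1, 17)`.
-/

open Real Set Topology

lemma log_le_sub_inv_div_two {x : ℝ} (hx : 1 ≤ x) : log x ≤ (x - x⁻¹) / 2 := by
  rw [← sinh_log (by linarith)]
  exact self_le_sinh_iff.mpr (log_nonneg hx)

namespace LogBound

noncomputable def u (K : ℝ) : ℝ := (3 * K - 2) * log 2 + 2 * K * log K

noncomputable def v (K : ℝ) : ℝ := 2 + 3 * log 2 + 2 * log K

noncomputable def ψ (K : ℝ) : ℝ :=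
  log (4 + 6 * log 2) + (4 + 6 * log 2) * (K - 1) - u K - log (v K)

noncomputable def dψ (K : ℝ) : ℝ := 4 + 6 * log 2 - v K - 2 / (K * v K)

lemma two_rpow_mul_rpow_eq_exp_u {K : ℝ} (hK : 0 < K) :
    (2 : ℝ) ^ (3 * K - 2) * K ^ (2 * K) = exp (u K) := by
  rw [rpow_def_of_pos two_pos, rpow_def_of_pos hK, ← exp_add, u]
  ring_nf

lemma four_lt_v {K : ℝ} (hK : 1 ≤ K) : 4 < v K := by
  have := log_nonneg hK
  have := log_two_gt_d9
  unfold v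
  linarith

lemma hasDerivAt_u {K : ℝ} (hK : K ≠ 0) : HasDerivAt u (v K) K := by
  have h := (((hasDerivAt_id K).const_mul 3).sub_const 2).mul_const (log 2) |>.add
    ((hasDerivAt_mul_log hK).const_mul 2)
  have hu : u = fun x ↦ (3 * x - 2) * log 2 + 2 * (x * log x) := by
    funext x; rw [u]; ring
  rw [hu]
  exact h.congr_deriv (by rw [v]; ring)

lemma hasDerivAt_v {K : ℝ} (hK : K ≠ 0) : HasDerivAt v (2 / K) K := by
  have h := ((hasDerivAt_log hK).const_mul 2).const_add (2 + 3 * log 2)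
  exact h.congr_deriv (by ring)

lemma hasDerivAt_ψ {K : ℝ} (hK : 1 ≤ K) : HasDerivAt ψ (dψ K) K := by
  have hK0 : K ≠ 0 := by positivity
  have h := (((hasDerivAt_id K).sub_const 1).const_mul (4 + 6 * log 2)).const_add
    (log (4 + 6 * log 2)) |>.sub (hasDerivAt_u hK0) |>.sub
    ((hasDerivAt_v hK0).log (by linarith [four_lt_v hK]))
  exact h.congr_deriv (by rw [dψ]; field_simp)

lemma hasDerivAt_dψ {K : ℝ} (hK : 1 ≤ K) :
    HasDerivAt dψ (-(2 / K) + 2 * (v K + 2) / (K * v K) ^ 2) K := by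
  have hK0 : K ≠ 0 := by positivity
  have hv := four_lt_v hK
  have hKv : HasDerivAt (fun x ↦ x * v x) (v K + 2) K :=
    ((hasDerivAt_id K).mul (hasDerivAt_v hK0)).congr_deriv (by simp only [id]; field_simp)
  have h := ((hasDerivAt_const K (4 + 6 * log 2)).sub (hasDerivAt_v hK0)).sub
    ((hKv.inv (by positivity)).const_mul 2)
  have hdψ : dψ = fun x ↦ 4 + 6 * log 2 - v x - 2 * (x * v x)⁻¹ := by
    funext x; rw [dψ, div_eq_mul_inv]
  rw [hdψ]
  exact h.congr_deriv (by ring)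

lemma strictConcaveOn_ψ : StrictConcaveOn ℝ (Ici 1) ψ := by
  refine strictConcaveOn_of_deriv2_neg (convex_Ici 1)
    (fun x hx ↦ (hasDerivAt_ψ hx).continuousAt.continuousWithinAt) fun x hx ↦ ?_
  rw [interior_Ici, mem_Ioi] at hx
  have hderiv : deriv ψ =ᶠ[𝓝 x] dψ := by
    filter_upwards [Ioi_mem_nhds hx] with y hy using (hasDerivAt_ψ (le_of_lt hy)).deriv
  rw [Function.iterate_succ_apply, Function.iterate_one, hderiv.deriv_eq,
    (hasDerivAt_dψ hx.le).deriv]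
  have hv := four_lt_v hx.le
  have hx0 : 0 < x := by linarith
  have : 2 * (v x + 2) / (x * v x) ^ 2 < 2 / x := by
    rw [div_lt_div_iff₀ (by positivity) hx0]
    nlinarith [mul_pos hx0 (mul_pos (sub_pos.2 hx) (by positivity : 0 < v x ^ 2))]
  linarith

lemma ψ_one : ψ 1 = 0 := by
  have h : (4 + 6 * log 2 : ℝ) = 2 * (2 + 3 * log 2) := by ring
  simp only [ψ, u, v, log_one, mul_zero, add_zero]
  rw [h, log_mul two_ne_zero (by positivity)]
  ring

lemma ψ_seventeen_pos : 0 < ψ 17 := by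
  have hL := log_two_gt_d9
  have hL' := log_two_lt_d9
  -- `ψ 17 ≈ 0.07`, so `log 17` is needed to within `10⁻³`: `log (17/16) ≤ 1/16` is too weak.
  set m := log (17 / 16) with hm_def
  have hlog17 : log 17 = 4 * log 2 + m := by
    rw [hm_def, log_div (by norm_num) (by norm_num), show (16 : ℝ) = 2 ^ 4 by norm_num, log_pow]
    push_cast; ring
  have hm : m ≤ 33 / 544 := (log_le_sub_inv_div_two (by norm_num)).trans_eq (by norm_num)
  have hm0 : 0 ≤ m := log_nonneg (by norm_num)
  have hc : (0 : ℝ) < 4 + 6 * log 2 := by positivity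
  have hv : 0 < v 17 := by linarith [four_lt_v (by norm_num : (1 : ℝ) ≤ 17)]
  have hratio : 1 - v 17 / (4 + 6 * log 2) ≤ log (4 + 6 * log 2) - log (v 17) := by
    rw [← log_div hc.ne' hv.ne', ← inv_div]
    exact one_sub_inv_le_log_of_pos (div_pos hc hv)
  have hfrac : v 17 / (4 + 6 * log 2) < 65 - 89 * log 2 - 34 * m := by
    rw [div_lt_iff₀ hc, v, hlog17]
    nlinarith
  have : ψ 17 = log (4 + 6 * log 2) - log (v 17) + 64 - 89 * log 2 - 34 * m := by
    rw [ψ, u, hlog17]; ring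
  linarith

lemma ψ_pos {K : ℝ} (hK : K ∈ Ioo 1 17) : 0 < ψ K := by
  have h := strictConcaveOn_ψ.lt_on_openSegment self_mem_Ici (by norm_num : (17 : ℝ) ∈ Ici 1)
    (by norm_num) (Ioo_subset_openSegment hK)
  rwa [ψ_one, min_eq_left ψ_seventeen_pos.le] at h

lemma strictMonoOn_exp_sub_exp_u :
    StrictMonoOn (fun K ↦ exp ((4 + 6 * log 2) * (K - 1)) - exp (u K)) (Icc 1 17) := by
  have hderiv (K : ℝ) (hK : 1 ≤ K) :
      HasDerivAt (fun K ↦ exp ((4 + 6 * log 2) * (K - 1)) - exp (u K))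
        ((4 + 6 * log 2) * exp ((4 + 6 * log 2) * (K - 1)) - v K * exp (u K)) K := by
    have h := ((((hasDerivAt_id K).sub_const 1).const_mul (4 + 6 * log 2)).exp).sub
      (hasDerivAt_u (by positivity)).exp
    exact h.congr_deriv (by simp only [id]; ring)
  refine strictMonoOn_of_deriv_pos (convex_Icc 1 17)
    (fun x hx ↦ (hderiv x hx.1).continuousAt.continuousWithinAt) fun x hx ↦ ?_
  rw [interior_Icc] at hx
  have hψ := ψ_pos hx
  have hv : 0 < v x := by linarith [four_lt_v hx.1.le]
  have hc : (0 : ℝ) < 4 + 6 * log 2 := by positivity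
  have hlog : log (v x) + u x < log (4 + 6 * log 2) + (4 + 6 * log 2) * (x - 1) := by
    rw [ψ] at hψ; linarith
  rw [(hderiv x hx.1.le).deriv, sub_pos]
  calc v x * exp (u x) = exp (log (v x) + u x) := by rw [exp_add, exp_log hv]
    _ < exp (log (4 + 6 * log 2) + (4 + 6 * log 2) * (x - 1)) := exp_lt_exp.2 hlog
    _ = (4 + 6 * log 2) * exp ((4 + 6 * log 2) * (x - 1)) := by rw [exp_add, exp_log hc]

lemma log_exp_u_sub_one_lt {K : ℝ} (h1 : 1 < K) (h17 : K ≤ 17) :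
    log (exp (u K) - 1) < (4 + 6 * log 2) * (K - 1) := by
  have hu : 0 < u K := by
    rw [u]; nlinarith [log_nonneg h1.le, log_pos one_lt_two]
  have hmono := strictMonoOn_exp_sub_exp_u (left_mem_Icc.2 (by norm_num)) ⟨h1.le, h17⟩ h1
  have hu1 : u 1 = log 2 := by norm_num [u]
  simp only [sub_self, mul_zero, exp_zero, hu1, exp_log two_pos] at hmono
  rw [log_lt_iff_lt_exp (by linarith [one_lt_exp_iff.2 hu])]
  linarith

end LogBound

/-- For `1 ≤ K ≤ 17`, `log(2^{3K-2} K^{2K} - 1) ≤ (4 + 6 log 2)(K - 1)`,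
with equality only for `K = 1`. -/
theorem stmt_11 (K : ℝ) (hK1 : 1 ≤ K) (hK17 : K ≤ 17) :
    Real.log ((2 : ℝ) ^ (3 * K - 2) * K ^ (2 * K) - 1) ≤
      (4 + 6 * Real.log 2) * (K - 1) ∧
    (Real.log ((2 : ℝ) ^ (3 * K - 2) * K ^ (2 * K) - 1) =
      (4 + 6 * Real.log 2) * (K - 1) → K = 1) := by
  rw [LogBound.two_rpow_mul_rpow_eq_exp_u (by linarith)]
  rcases hK1.eq_or_lt with rfl | h1
  · norm_num [LogBound.u, exp_log two_pos]
  · have h := LogBound.log_exp_u_sub_one_lt h1 hK17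
    exact ⟨h.le, fun h' ↦ absurd h' h.ne⟩
end
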